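/- For any two distinct generator quadruples Q and Q' among the fifty-five generator quadruples of the fan Δ', the intersection cone(Q) ∩ cone(Q') equals cone(Q ∩ Q') (where cone(∅) = {0}). That is, any two maximal cones of Δ' intersect exactly in the cone spanned by their common generators. -/
import Mathlib


open Matrix

noncomputable section

def e1 : Fin 4 → ℝ := ![1, 0, 0, 0]
def e2 : Fin 4 → ℝ := ![0, 1, 0, 0]
def e3 : Fin 4 → ℝ := ![0, 0, 1, 0]
def e4 : Fin 4 → ℝ := ![0, 0, 0, 1]
def d1 : Fin 4 → ℝ := ![-1, 0, -2, 1]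
def d2 : Fin 4 → ℝ := ![-2, -1, 0, 1]
def d3 : Fin 4 → ℝ := ![0, -2, -1, 1]
def d4 : Fin 4 → ℝ := ![1, 0, 1, -1]
def c1 : Fin 4 → ℝ := ![1, -1, 0, 0]
def c2 : Fin 4 → ℝ := ![0, -1, 1, 0]
def c3 : Fin 4 → ℝ := ![-1, -2, 0, 1]
def c4 : Fin 4 → ℝ := ![-1, -1, -1, 1]
def c5 : Fin 4 → ℝ := ![-1, -2, -1, 2]
def c6 : Fin 4 → ℝ := ![-2, -2, -1, 2]
def c7 : Fin 4 → ℝ := ![-1, -1, -2, 2]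
def c8 : Fin 4 → ℝ := ![-1, -2, -2, 2]
def c9 : Fin 4 → ℝ := ![-2, -1, -1, 2]
def c10 : Fin 4 → ℝ := ![-2, -1, -2, 2]

/-- The cone generated by a set of vectors: all nonnegative linear combinations
of finitely many elements of `A` (so `coneS ∅ = {0}`). -/
def coneS (A : Set (Fin 4 → ℝ)) : Set (Fin 4 → ℝ) :=
  {x | ∃ (n : ℕ) (cf : Fin n → ℝ) (v : Fin n → (Fin 4 → ℝ)),
    (∀ i, 0 ≤ cf i) ∧ (∀ i, v i ∈ A) ∧ x = ∑ i, cf i • v i}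

def Qset : Fin 55 → Set (Fin 4 → ℝ) :=
  ![{e1, e2, e3, e4},
    {d1, e2, e3, e4},
    {e1, d2, e3, e4},
    {e1, e2, d3, e4},
    {e1, e2, e3, d4},
    {d1, d2, e3, e4},
    {e1, d2, d3, e4},
    {d1, e2, d3, e4},
    {e1, d2, e3, d3},
    {e1, e2, d3, d1},
    {d1, e2, e3, d2},
    {e1, e2, d1, d4},
    {d2, e2, e3, d4},
    {d1, e2, d2, d4},
    {c1, d3, e3, d4},
    {e1, c1, e3, d4},
    {e1, d3, e3, c1},
    {c1, d1, d3, d4},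
    {e1, d1, c1, d4},
    {e1, d1, d3, c1},
    {c2, d2, e3, d4},
    {d3, c2, e3, d4},
    {c3, d2, c2, d4},
    {d3, c3, c2, d4},
    {d3, d2, c3, d4},
    {c3, d2, e3, c2},
    {d3, c3, e3, c2},
    {d3, d2, e3, c3},
    {c5, d2, d3, e4},
    {c4, c5, d3, e4},
    {c6, d2, c5, e4},
    {c4, c6, c5, e4},
    {c4, d2, c6, e4},
    {c6, d2, d3, c5},
    {c4, c6, d3, c5},
    {c4, d2, d3, c6},
    {c8, c4, d3, e4},
    {c7, c8, d3, e4},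
    {c7, c4, c8, e4},
    {d1, c7, d3, e4},
    {d1, c4, c7, e4},
    {d1, c8, d3, c7},
    {d1, c4, c8, c7},
    {d1, c4, d3, c8},
    {c9, d2, c4, e4},
    {c10, c9, c4, e4},
    {d1, c10, c4, e4},
    {d1, c9, c10, e4},
    {d1, d2, c9, e4},
    {c10, d2, c4, c9},
    {d1, d2, c10, c9},
    {d1, d2, c4, c10},
    {c4, d2, d3, d4},
    {d1, c4, d3, d4},
    {d1, d2, c4, d4}]

/-- Any two distinct maximal cones of Δ' intersect exactly in the cone
spanned by their common generators. -/


def V : Fin 18 → (Fin 4 → ℝ) := ![e1, e2, e3, e4, d1, d2, d3, d4, c1, c2, c3, c4, c5, c6, c7, c8, c9, c10]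

def Z : Fin 18 → List ℤ := ![[1,0,0,0], [0,1,0,0], [0,0,1,0], [0,0,0,1], [-1,0,-2,1], [-2,-1,0,1], [0,-2,-1,1], [1,0,1,-1], [1,-1,0,0], [0,-1,1,0], [-1,-2,0,1], [-1,-1,-1,1], [-1,-2,-1,2], [-2,-2,-1,2], [-1,-1,-2,2], [-1,-2,-2,2], [-2,-1,-1,2], [-2,-1,-2,2]]

lemma V0 : V 0 = e1 := rfl
lemma V1 : V 1 = e2 := rfl
lemma V2 : V 2 = e3 := rfl
lemma V3 : V 3 = e4 := rfl
lemma V4 : V 4 = d1 := rfl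
lemma V5 : V 5 = d2 := rfl
lemma V6 : V 6 = d3 := rfl
lemma V7 : V 7 = d4 := rfl
lemma V8 : V 8 = c1 := rfl
lemma V9 : V 9 = c2 := rfl
lemma V10 : V 10 = c3 := rfl
lemma V11 : V 11 = c4 := rfl
lemma V12 : V 12 = c5 := rfl
lemma V13 : V 13 = c6 := rfl
lemma V14 : V 14 = c7 := rfl
lemma V15 : V 15 = c8 := rfl
lemma V16 : V 16 = c9 := rfl
lemma V17 : V 17 = c10 := rfl

def Qi : Fin 55 → List (Fin 18) := ![[0,1,2,3], [4,1,2,3], [0,5,2,3], [0,1,6,3], [0,1,2,7], [4,5,2,3], [0,5,6,3], [4,1,6,3], [0,5,2,6], [0,1,6,4], [4,1,2,5], [0,1,4,7], [5,1,2,7], [4,1,5,7], [8,6,2,7], [0,8,2,7], [0,6,2,8], [8,4,6,7], [0,4,8,7], [0,4,6,8], [9,5,2,7], [6,9,2,7], [10,5,9,7], [6,10,9,7], [6,5,10,7], [10,5,2,9], [6,10,2,9], [6,5,2,10], [12,5,6,3], [11,12,6,3], [13,5,12,3], [11,13,12,3], [11,5,13,3], [13,5,6,12], [11,13,6,12], [11,5,6,13],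 [15,11,6,3], [14,15,6,3], [14,11,15,3], [4,14,6,3], [4,11,14,3], [4,15,6,14], [4,11,15,14], [4,11,6,15], [16,5,11,3], [17,16,11,3], [4,17,11,3], [4,16,17,3], [4,5,16,3], [17,5,11,16], [4,5,17,16], [4,5,11,17], [11,5,6,7], [4,11,6,7], [4,5,11,7]]

def wrow0 : List (List ℤ) := [[], [1,0,0,0], [0,1,0,0], [0,0,1,0], [0,0,0,1], [1,1,0,0], [0,1,1,0], [1,0,1,0], [0,1,0,1], [0,0,1,1], [1,0,0,1], [0,0,2,3], [2,0,0,3], [1,0,1,2], [2,2,0,3], [0,1,0,1], [0,2,0,3], [2,2,2,5], [0,2,2,3], [0,2,2,3], [1,1,0,2], [2,2,0,3], [2,2,2,5], [2,2,2,5], [4,4,6,11], [1,1,0,2], [2,2,0,3], [2,2,0,3], [1,1,1,0], [1,1,1,0], [1,1,1,0], [1,1,1,0], [1,1,1,0], [2,2,2,3], [2,2,2,3], [4,4,4,7], [1,1,1,0], [1,1,1,0], [1,1,1,0], [1,1,1,0], [1,1,1,0], [2,2,2,3], [2,2,2,3], [4,4,4,7], [1,1,1,0], [1,1,1,0], [1,1,1,0],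 [1,1,1,0], [1,1,1,0], [2,2,2,3], [2,2,2,3], [4,4,4,7], [4,4,6,11], [2,2,2,5], [4,4,6,11]]

def wrow1 : List (List ℤ) := [[], [], [-1,2,0,0], [-3,0,1,0], [0,0,0,1], [0,1,0,0], [-3,6,1,0], [-2,0,1,0], [0,1,0,1], [-1,0,1,1], [1,0,0,1], [0,0,1,2], [1,0,0,2], [2,0,1,4], [0,2,0,3], [0,1,0,1], [0,2,0,3], [0,2,3,6], [0,1,1,2], [0,2,3,6], [0,1,0,1], [0,2,0,3], [0,3,1,3], [0,3,2,6], [0,3,1,3], [0,1,0,1], [0,2,0,3], [0,1,0,1], [-3,6,1,0], [-3,2,1,0], [-3,6,1,0], [-6,5,2,0], [-3,6,1,0], [0,3,1,3], [0,5,2,6], [0,3,1,3], [-3,2,1,0], [-3,1,1,0], [-3,2,1,0], [-2,1,1,0], [-2,1,1,0], [0,2,1,2], [0,2,1,2], [0,1,1,2], [-3,6,1,0], [-3,5,1,0], [-2,2,1,0], [-2,3,1,0], [-2,4,1,0], [0,5,1,3], [0,3,1,2], [0,2,1,2], [0,3,1,3], [0,1,1,2], [0,2,1,2]]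

def wrow2 : List (List ℤ) := [[], [], [], [0,-1,2,0], [0,0,0,1], [1,-2,0,0], [0,0,1,0], [1,-3,6,0], [0,1,0,1], [0,0,1,1], [1,-1,0,1], [0,0,2,3], [2,-1,0,3], [1,0,1,2], [1,3,0,6], [0,0,0,1], [0,1,0,2], [1,1,2,4], [0,0,2,3], [0,0,1,1], [1,0,0,2], [1,3,0,6], [1,1,1,3], [2,4,3,10], [2,2,3,6], [1,1,0,3], [1,3,0,6], [1,2,0,4], [1,-2,4,0], [1,-3,6,0], [1,-2,3,0], [1,-3,5,0], [1,-2,2,0], [1,0,3,2], [1,0,5,3], [1,0,2,2], [1,-3,6,0], [1,-3,6,0], [2,-6,5,0], [1,-3,6,0], [1,-3,2,0], [1,0,3,3], [2,0,5,6], [1,0,3,3], [1,-2,1,0], [1,-3,2,0], [1,-3,2,0], [1,-3,1,0], [1,-2,1,0], [1,0,2,2], [1,0,2,2], [1,0,1,2], [2,1,3,5], [2,1,5,7], [1,0,1,2]]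

def wrow3 : List (List ℤ) := [[], [], [], [], [0,0,0,1], [6,1,-3,0], [0,1,-2,0], [1,0,0,0], [0,1,-1,1], [0,0,1,1], [1,0,0,1], [0,0,1,2], [2,0,0,3], [4,0,2,7], [2,2,-1,3], [0,1,0,3], [0,2,-1,3], [1,1,1,3], [0,1,3,6], [0,1,2,4], [1,1,0,3], [2,2,-1,3], [1,1,0,3], [1,1,0,2], [1,1,0,2], [1,1,0,3], [2,2,-1,3], [2,2,-1,3], [1,1,-2,0], [1,1,-2,0], [1,1,-3,0], [2,1,-3,0], [2,1,-3,0], [1,1,-1,1], [1,1,-1,1], [2,2,-1,3], [2,1,-2,0], [3,1,-2,0], [5,1,-3,0], [4,1,-2,0], [6,1,-3,0], [3,1,0,2], [5,1,0,3], [2,1,0,2], [2,1,-3,0], [5,2,-6,0], [6,1,-3,0], [6,1,-3,0], [6,1,-3,0], [5,2,-2,4], [8,3,1,10], [10,4,7,19], [1,1,0,2], [1,1,1,3], [4,2,3,9]]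

def wrow4 : List (List ℤ) := [[], [], [], [], [], [1,1,0,0], [0,1,1,0], [1,0,1,0], [0,1,0,-1], [0,0,1,0], [1,0,0,0], [0,0,1,1], [1,0,0,1], [1,0,1,2], [1,1,0,1], [0,1,0,0], [0,1,0,-1], [1,1,1,2], [0,1,1,1], [0,1,1,0], [1,1,0,1], [1,1,0,1], [1,1,1,2], [1,1,1,2], [2,2,3,5], [1,1,0,0], [1,1,0,0], [1,1,0,0], [1,1,1,0], [1,1,1,0], [1,1,1,0], [1,1,1,0], [1,1,1,0], [1,1,1,0], [1,1,1,0], [1,1,1,0], [1,1,1,0], [1,1,1,0], [1,1,1,0], [1,1,1,0], [1,1,1,0], [1,1,1,0], [1,1,1,0], [1,1,1,0], [1,1,1,0], [1,1,1,0], [1,1,1,0], [1,1,1,0], [1,1,1,0], [1,1,1,0], [1,1,1,0], [1,1,1,0], [2,2,3,5], [1,1,1,2], [2,2,3,5]]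

def wrow5 : List (List ℤ) := [[], [], [], [], [], [], [-3,6,1,0], [-8,-1,4,0], [0,1,0,1], [-1,0,1,1], [1,-1,0,1], [0,0,1,2], [1,0,0,2], [2,0,1,4], [0,1,0,2], [0,0,0,1], [0,1,0,2], [0,1,2,4], [0,0,1,2], [0,1,2,4], [0,1,0,1], [0,1,0,2], [0,3,1,3], [0,3,2,6], [0,3,1,3], [0,1,0,1], [0,1,0,2], [0,1,0,1], [-3,6,1,0], [-6,7,2,0], [-3,6,1,0], [-12,15,4,0], [-3,6,1,0], [0,3,1,3], [0,4,2,5], [0,3,1,3], [-6,7,2,0], [-3,3,1,0], [-6,7,2,0], [-4,3,2,0], [-2,2,1,0], [-1,3,2,3], [-1,3,2,3], [0,1,1,2], [-3,6,1,0], [-3,5,1,0], [-4,5,2,0], [-2,3,1,0], [-2,4,1,0], [-2,5,1,1], [-1,3,1,1], [0,2,1,2], [0,3,1,3], [0,1,1,2], [0,2,1,2]]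

def wrow6 : List (List ℤ) := [[], [], [], [], [], [], [], [1,-3,6,0], [0,1,-1,1], [0,0,1,1], [1,-1,0,1], [0,0,1,2], [2,-1,0,3], [8,-4,3,12], [1,3,0,6], [0,0,0,1], [0,1,0,2], [1,1,2,4], [0,0,1,2], [0,0,1,1], [1,0,0,2], [1,3,0,6], [1,1,0,3], [1,2,1,5], [1,1,1,3], [1,1,0,3], [1,3,0,6], [1,2,0,4], [1,-2,4,0], [1,-3,6,0], [1,-2,3,0], [1,-3,5,0], [2,-4,5,0], [1,-1,3,1], [1,-2,5,1], [2,-1,5,3], [1,-3,6,0], [1,-3,6,0], [4,-12,15,0], [1,-3,6,0], [2,-6,7,0], [1,0,3,3], [2,-1,5,5], [1,0,3,3], [1,-2,2,0], [2,-6,7,0], [2,-6,7,0], [1,-3,3,0], [2,-4,3,0], [4,-3,6,5], [4,-3,6,5], [4,-2,5,6], [4,3,5,11], [4,3,9,15], [1,0,1,2]]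

def wrow7 : List (List ℤ) := [[], [], [], [], [], [], [], [], [0,1,-1,1], [-1,0,1,1], [1,0,0,1], [0,0,1,2], [2,0,-1,4], [2,0,1,4], [0,2,-1,3], [0,1,0,3], [0,2,-1,3], [0,1,2,4], [0,1,3,6], [0,1,2,4], [0,1,-2,1], [0,2,-1,3], [0,1,-2,1], [0,2,-1,3], [0,1,-1,1], [0,1,-2,1], [0,2,-1,3], [0,1,-1,1], [0,1,-2,0], [1,1,-2,0], [1,1,-3,0], [2,1,-3,0], [2,1,-3,0], [1,1,-1,1], [1,1,-1,1], [2,2,-1,3], [2,1,-2,0], [3,1,-2,0], [5,1,-3,0], [4,1,-2,0], [6,1,-3,0], [3,1,-1,1], [5,1,-2,1], [2,1,0,2], [2,1,-3,0], [5,2,-6,0], [6,1,-3,0], [6,1,-3,0], [6,1,-3,0], [10,4,-5,7], [8,3,1,10], [5,2,1,7], [2,2,-1,3], [1,1,1,3], [2,1,1,4]]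

def wrow8 : List (List ℤ) := [[], [], [], [], [], [], [], [], [], [0,0,1,1], [1,-1,0,1], [0,0,1,2], [2,-1,0,3], [1,0,1,2], [1,3,0,6], [0,0,0,1], [0,1,0,2], [1,1,2,4], [0,0,1,2], [0,0,1,1], [2,1,0,5], [1,3,0,6], [2,2,1,6], [1,2,1,5], [1,1,1,3], [1,1,0,3], [1,3,0,6], [1,2,0,4], [1,-2,4,0], [1,-3,6,0], [1,-2,3,0], [1,-3,5,0], [2,-4,5,0], [1,-1,3,1], [1,-2,5,1], [1,0,2,2], [1,-3,6,0], [1,-3,6,0], [4,-12,15,0], [1,-3,6,0], [2,-6,7,0], [1,0,3,3], [2,-1,5,5], [1,0,3,3], [1,-2,2,0], [2,-6,7,0], [2,-6,7,0], [1,-3,3,0], [1,-2,2,0], [2,-1,3,3], [2,-1,3,3], [1,0,1,2], [4,3,5,11], [4,3,9,15], [1,0,1,2]]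

def wrow9 : List (List ℤ) := [[], [], [], [], [], [], [], [], [], [], [1,0,0,1], [0,0,1,2], [1,0,0,2], [4,0,1,6], [1,1,0,2], [0,1,0,3], [0,1,0,2], [1,1,1,3], [0,1,3,6], [0,1,2,4], [1,1,0,3], [1,1,0,2], [1,1,0,3], [1,1,0,2], [1,1,0,2], [1,1,0,3], [1,1,0,2], [1,1,0,2], [1,1,-2,0], [1,1,-2,0], [1,1,-3,0], [2,1,-3,0], [2,1,-3,0], [1,1,-1,1], [1,1,-1,1], [1,1,0,2], [2,1,-2,0], [3,1,-2,0], [5,1,-3,0], [4,1,-2,0], [6,1,-3,0], [3,1,-1,1], [5,1,-2,1], [2,1,0,2], [2,1,-3,0], [5,2,-6,0], [6,1,-3,0], [6,1,-3,0], [6,1,-3,0], [5,2,-1,5], [8,3,1,10], [5,2,1,7], [1,1,0,2], [1,1,1,3], [2,1,1,4]]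

def wrow10 : List (List ℤ) := [[], [], [], [], [], [], [], [], [], [], [], [0,0,1,2], [1,0,0,2], [2,0,1,4], [0,1,0,2], [0,1,0,2], [0,1,0,2], [0,2,3,6], [0,1,1,2], [0,2,3,6], [0,1,0,1], [0,1,0,2], [0,3,1,3], [0,3,2,6], [0,3,1,3], [0,1,0,1], [0,1,0,2], [0,1,0,1], [-3,6,1,0], [-6,7,2,0], [-3,6,1,0], [-12,15,4,0], [-3,6,1,0], [0,3,1,3], [0,4,2,5], [0,3,1,3], [-6,7,2,0], [-3,3,1,0], [-6,7,2,0], [-2,2,1,0], [-2,2,1,0], [-1,3,2,3], [-1,3,2,3], [0,1,1,2], [-3,6,1,0], [-3,5,1,0], [-4,5,2,0], [-2,3,1,0], [-2,4,1,0], [-2,5,1,1], [-1,3,1,1], [0,2,1,2], [0,3,1,3], [0,1,1,2], [0,2,1,2]]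

def wrow11 : List (List ℤ) := [[], [], [], [], [], [], [], [], [], [], [], [], [1,0,-1,0], [1,0,0,1], [1,1,-1,0], [0,1,-1,-1], [0,1,-2,-3], [1,1,0,1], [0,1,0,0], [0,1,-1,-2], [1,1,-1,0], [1,1,-1,0], [1,1,-1,0], [1,1,-1,0], [1,1,-1,0], [1,1,-2,-2], [1,1,-2,-2], [1,1,-2,-2], [1,1,-2,-2], [1,1,-2,-2], [1,1,-2,-2], [1,1,-2,-2], [1,1,-2,-2], [1,1,-2,-2], [1,1,-2,-2], [1,1,-2,-2], [1,1,-2,-2], [1,1,-2,-2], [1,1,-2,-2], [1,1,-1,-1], [1,1,-1,-1], [1,1,-1,-1], [1,1,-1,-1], [1,1,-1,-1], [1,1,-2,-2], [1,1,-2,-2], [1,1,-1,-1], [1,1,-1,-1], [1,1,-1,-1], [1,1,-2,-2], [1,1,-1,-1], [1,1,-1,-1], [1,1,-1,0], [1,1,0,1], [1,1,0,1]]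

def wrow12 : List (List ℤ) := [[], [], [], [], [], [], [], [], [], [], [], [], [], [1,0,1,2], [-2,1,0,-2], [-2,1,0,-2], [-3,1,0,-4], [0,1,2,2], [0,1,2,2], [0,1,3,2], [-1,1,0,-1], [-2,1,0,-2], [0,1,1,1], [-1,1,1,0], [0,1,1,1], [-2,1,0,-3], [-3,1,0,-4], [-2,1,0,-3], [-1,2,3,0], [-1,1,2,0], [-1,2,3,0], [-1,1,2,0], [-1,2,3,0], [0,1,2,1], [0,1,3,2], [0,1,2,1], [-1,1,2,0], [-1,1,2,0], [-1,1,2,0], [-1,1,2,0], [-1,1,2,0], [0,1,3,2], [0,1,3,2], [0,1,3,2], [-1,2,3,0], [-1,1,2,0], [-1,1,2,0], [-1,1,2,0], [-1,2,3,0], [0,1,2,1], [0,1,2,1], [0,1,2,1], [0,1,1,1], [0,1,2,2], [0,1,1,1]]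

def wrow13 : List (List ℤ) := [[], [], [], [], [], [], [], [], [], [], [], [], [], [], [-3,1,-1,-4], [-3,1,-1,-4], [-5,1,-2,-8], [-2,1,0,-2], [-2,1,0,-2], [-4,1,-1,-6], [-2,1,-1,-3], [-3,1,-1,-4], [-2,1,-1,-3], [-3,1,-1,-4], [-2,1,-1,-3], [-4,1,-2,-7], [-5,1,-2,-8], [-4,1,-2,-7], [-4,1,-2,-7], [-5,1,-2,-8], [-4,1,-2,-7], [-5,1,-2,-8], [-4,1,-2,-7], [-4,1,-2,-7], [-5,1,-2,-8], [-4,1,-2,-7], [-5,1,-2,-8], [-5,1,-2,-8], [-5,1,-2,-8], [-4,1,-1,-6], [-4,1,-1,-6], [-4,1,-1,-6], [-4,1,-1,-6], [-4,1,-1,-6], [-4,1,-2,-7], [-5,1,-2,-8], [-4,1,-1,-6], [-4,1,-1,-6], [-3,1,-1,-5], [-4,1,-2,-7], [-3,1,-1,-5], [-3,1,-1,-5], [-2,1,-1,-3], [-2,1,0,-2], [-1,1,0,-1]]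

def wrow14 : List (List ℤ) := [[], [], [], [], [], [], [], [], [], [], [], [], [], [], [], [-1,-1,0,-1], [-1,-1,0,-2], [0,0,1,1], [-1,-1,1,0], [-1,-1,1,-1], [1,0,0,1], [2,1,0,2], [3,1,1,4], [2,1,1,3], [4,2,3,7], [2,0,0,1], [1,0,0,0], [0,-1,0,-2], [0,-1,1,-1], [0,-2,3,-1], [0,-2,1,-2], [0,-3,2,-2], [0,-2,1,-2], [0,-1,1,-1], [0,-2,3,-1], [0,-1,1,-1], [0,-2,3,-1], [0,-2,3,-1], [0,-1,1,0], [0,-2,3,-1], [0,-1,1,0], [0,-1,1,-1], [0,-1,1,0], [0,-1,1,-1], [0,-2,1,-2], [0,-1,1,0], [0,-1,1,0], [0,-1,1,0], [0,-2,1,-2], [0,-2,1,-2], [0,-2,1,-2], [0,-2,1,-2], [2,1,2,4], [2,1,1,3], [1,0,1,2]]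

def wrow15 : List (List ℤ) := [[], [], [], [], [], [], [], [], [], [], [], [], [], [], [], [], [0,0,0,-1], [1,1,1,2], [0,0,1,1], [0,0,1,0], [1,0,0,1], [2,1,0,2], [2,1,1,3], [2,1,1,3], [4,2,3,7], [1,0,0,0], [1,0,0,0], [1,0,0,0], [1,0,1,0], [1,0,1,0], [1,0,1,0], [1,0,1,0], [1,0,1,0], [1,0,1,0], [1,0,1,0], [1,0,1,0], [1,0,1,0], [1,0,1,0], [1,0,1,0], [1,0,1,0], [1,0,1,0], [1,0,1,0], [1,0,1,0], [1,0,1,0], [1,0,1,0], [1,0,1,0], [1,0,1,0], [1,0,1,0], [1,0,1,0], [1,0,1,0], [1,0,1,0], [1,0,1,0], [2,1,2,4], [2,1,1,3], [1,0,1,2]]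

def wrow16 : List (List ℤ) := [[], [], [], [], [], [], [], [], [], [], [], [], [], [], [], [], [], [1,1,1,3], [0,0,1,2], [0,0,1,1], [2,0,0,3], [2,1,0,2], [2,1,1,4], [2,1,1,3], [4,2,3,7], [1,0,0,1], [1,0,0,0], [1,0,0,0], [2,-1,2,0], [2,-1,2,0], [1,-1,1,0], [1,-1,1,0], [1,-1,1,0], [1,0,1,1], [1,0,1,1], [2,0,3,3], [2,-1,2,0], [2,-1,2,0], [1,-1,1,0], [2,-1,2,0], [1,-1,1,0], [1,0,1,1], [2,-1,2,2], [1,0,1,1], [1,-1,1,0], [1,-1,1,0], [1,-1,1,0], [1,-1,1,0], [1,-1,1,0], [3,-1,3,4], [3,-1,3,4], [1,0,1,2], [2,1,2,4], [2,1,1,3], [1,0,1,2]]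

def wrow17 : List (List ℤ) := [[], [], [], [], [], [], [], [], [], [], [], [], [], [], [], [], [], [], [-1,-1,0,-1], [-1,-1,-1,-3], [0,-1,-1,-1], [2,1,-1,1], [0,-1,-2,-2], [2,1,-1,1], [2,1,-1,1], [0,-1,-2,-3], [0,-1,-3,-5], [0,-1,-3,-5], [0,-1,-3,-5], [0,-1,-3,-5], [0,-1,-2,-3], [0,-1,-2,-3], [0,-1,-2,-3], [0,-1,-3,-5], [0,-1,-3,-5], [0,-1,-3,-5], [0,-1,-3,-5], [0,-1,-3,-5], [0,-1,-2,-3], [0,-1,-2,-4], [0,-1,-1,-2], [0,-1,-2,-4], [0,-1,-1,-2], [0,-1,-2,-4], [0,-1,-2,-3], [0,-1,-2,-3], [0,-1,-1,-2], [0,-1,-1,-2], [0,-1,-1,-2], [0,-1,-2,-3], [0,-1,-1,-2], [0,-1,-1,-2], [2,1,-1,1], [2,1,0,2], [1,0,0,1]]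

def wrow18 : List (List ℤ) := [[], [], [], [], [], [], [], [], [], [], [], [], [], [], [], [], [], [], [], [0,0,-1,-2], [1,0,-1,0], [2,1,-1,1], [1,0,-1,0], [2,1,-1,1], [2,1,-1,1], [1,0,-2,-2], [1,0,-2,-2], [1,0,-2,-2], [1,0,-2,-2], [1,0,-2,-2], [1,0,-2,-2], [1,0,-2,-2], [1,0,-2,-2], [1,0,-2,-2], [1,0,-2,-2], [1,0,-2,-2], [1,0,-2,-2], [1,0,-2,-2], [1,0,-2,-2], [1,0,-1,-1], [1,0,-1,-1], [1,0,-1,-1], [1,0,-1,-1], [1,0,-1,-1], [1,0,-2,-2], [1,0,-2,-2], [1,0,-1,-1], [1,0,-1,-1], [1,0,-1,-1], [1,0,-2,-2], [1,0,-1,-1], [1,0,-1,-1], [2,1,-1,1], [2,1,0,2], [1,0,0,1]]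

def wrow19 : List (List ℤ) := [[], [], [], [], [], [], [], [], [], [], [], [], [], [], [], [], [], [], [], [], [1,0,0,2], [2,1,-1,1], [2,0,-1,2], [2,1,-1,1], [2,1,-1,1], [2,0,-1,2], [1,0,-2,-2], [1,0,-2,-2], [1,0,-2,-2], [1,0,-2,-2], [1,0,-1,0], [1,0,-1,0], [1,0,-1,0], [1,0,-2,-2], [1,0,-2,-2], [1,0,-2,-2], [1,0,-2,-2], [1,0,-2,-2], [2,-1,-4,-4], [1,0,-1,-1], [3,-1,-2,-1], [1,0,-1,-1], [2,-1,-2,-2], [1,0,-1,-1], [1,0,-1,0], [1,0,-1,0], [4,-1,-2,0], [4,-1,-2,0], [4,-1,-2,0], [1,0,-1,0], [1,0,0,1], [1,0,0,1], [2,1,-1,1], [2,1,0,2], [1,0,0,1]]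

def wrow20 : List (List ℤ) := [[], [], [], [], [], [], [], [], [], [], [], [], [], [], [], [], [], [], [], [], [], [-1,0,0,-1], [0,1,1,1], [-1,1,1,0], [1,1,2,3], [-1,0,0,-2], [-2,0,0,-3], [-1,-1,0,-3], [0,0,1,0], [0,-1,2,0], [0,0,1,0], [0,-1,2,0], [0,0,1,0], [0,0,1,0], [0,0,2,1], [0,0,1,0], [0,-1,2,0], [0,-1,2,0], [0,-1,1,0], [0,-1,2,0], [0,-1,1,0], [0,0,2,1], [0,0,2,1], [0,0,2,1], [0,0,1,0], [0,-1,1,0], [0,-1,1,0], [0,-1,1,0], [0,0,1,0], [0,0,1,0], [0,0,1,0], [0,0,1,0], [2,1,3,5], [0,0,1,1], [1,0,1,2]]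

def wrow21 : List (List ℤ) := [[], [], [], [], [], [], [], [], [], [], [], [], [], [], [], [], [], [], [], [], [], [], [3,1,1,4], [2,1,1,3], [2,1,2,4], [2,0,0,1], [1,0,0,0], [0,-1,0,-2], [0,-1,1,-1], [0,-1,2,0], [0,-2,1,-2], [0,-3,2,-2], [0,-2,1,-2], [0,-1,1,-1], [0,-1,2,0], [0,-1,1,-1], [0,-1,2,0], [0,-1,2,0], [0,-1,1,0], [0,-1,2,0], [0,-1,1,0], [0,-1,2,0], [0,-1,1,0], [0,-1,2,0], [0,-2,1,-2], [0,-1,1,0], [0,-1,1,0], [0,-1,1,0], [0,-2,1,-2], [0,-2,1,-2], [0,-2,1,-2], [0,-2,1,-2], [2,1,3,5], [0,0,1,1], [1,0,1,2]]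

def wrow22 : List (List ℤ) := [[], [], [], [], [], [], [], [], [], [], [], [], [], [], [], [], [], [], [], [], [], [], [], [-1,0,0,-1], [1,1,2,3], [-1,-1,-1,-3], [-2,-1,-1,-4], [-1,-1,0,-3], [0,-1,1,-1], [0,-1,2,0], [0,-1,0,-1], [0,-1,2,0], [0,-1,0,-1], [0,-1,1,-1], [0,0,2,1], [0,-1,1,-1], [0,-1,2,0], [0,-1,2,0], [0,-1,1,0], [0,-1,2,0], [0,-1,1,0], [0,0,2,1], [0,0,2,1], [0,0,2,1], [0,-1,0,-1], [0,-1,1,0], [0,-1,1,0], [0,-1,1,0], [0,-1,0,-1], [0,-1,0,-1], [0,-1,0,-1], [0,-1,0,-1], [2,1,3,5], [0,0,1,1], [1,0,1,2]]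

def wrow23 : List (List ℤ) := [[], [], [], [], [], [], [], [], [], [], [], [], [], [], [], [], [], [], [], [], [], [], [], [], [2,1,2,4], [0,-1,-1,-2], [-1,-1,-1,-3], [0,-1,0,-2], [0,-1,1,-1], [0,-1,2,0], [0,-1,0,-1], [0,-1,0,-1], [0,-1,0,-1], [0,-1,1,-1], [0,-1,2,0], [0,-1,1,-1], [0,-1,2,0], [0,-1,2,0], [0,-2,1,-1], [0,-1,2,0], [0,-2,1,-1], [0,-1,2,0], [0,-1,0,-1], [0,-1,2,0], [0,-1,0,-1], [0,-2,1,-1], [0,-2,1,-1], [0,-2,1,-1], [0,-1,0,-1], [0,-1,0,-1], [0,-1,0,-1], [0,-1,0,-1], [2,1,3,5], [0,0,1,1], [1,0,1,2]]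

def wrow24 : List (List ℤ) := [[], [], [], [], [], [], [], [], [], [], [], [], [], [], [], [], [], [], [], [], [], [], [], [], [], [-2,-2,-3,-6], [-3,-2,-3,-7], [-1,-1,-1,-3], [0,-1,1,-1], [0,-1,2,0], [0,-1,0,-1], [0,-2,2,-1], [0,-1,0,-1], [0,-1,1,-1], [0,-1,2,0], [0,-1,1,-1], [0,-1,2,0], [0,-1,2,0], [0,-1,1,0], [0,-1,2,0], [0,-1,1,0], [0,-1,3,1], [0,-1,1,0], [0,-1,3,1], [0,-1,0,-1], [0,-1,1,0], [0,-1,1,0], [0,-1,1,0], [0,-1,0,-1], [0,-1,0,-1], [0,-1,0,-1], [0,-1,0,-1], [2,1,3,5], [0,0,1,1], [1,0,1,2]]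

def wrow25 : List (List ℤ) := [[], [], [], [], [], [], [], [], [], [], [], [], [], [], [], [], [], [], [], [], [], [], [], [], [], [], [-1,0,0,-1], [-1,-1,0,-3], [0,-1,1,-1], [0,-1,2,0], [0,-1,1,-1], [0,-1,2,0], [0,-1,1,-1], [0,-1,1,-1], [0,0,2,1], [0,-1,1,-1], [0,-1,2,0], [0,-1,2,0], [0,-1,1,0], [0,-1,2,0], [0,-1,1,0], [0,0,1,1], [0,0,1,1], [0,0,1,1], [0,-1,1,-1], [0,-1,1,0], [0,-1,1,0], [0,-1,1,0], [0,-1,1,-1], [0,-1,1,-1], [0,-1,1,-1], [0,-1,1,-1], [2,1,3,5], [0,0,1,1], [1,0,1,2]]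

def wrow26 : List (List ℤ) := [[], [], [], [], [], [], [], [], [], [], [], [], [], [], [], [], [], [], [], [], [], [], [], [], [], [], [], [0,-1,0,-2], [0,-1,1,-1], [0,-1,2,0], [0,-2,1,-2], [0,-3,2,-2], [0,-2,1,-2], [0,-1,1,-1], [0,-1,2,0], [0,-1,1,-1], [0,-1,2,0], [0,-1,2,0], [0,-1,1,0], [0,-1,2,0], [0,-1,1,0], [0,0,1,1], [0,-1,1,0], [0,0,1,1], [0,-2,1,-2], [0,-1,1,0], [0,-1,1,0], [0,-1,1,0], [0,-2,1,-2], [0,-2,1,-2], [0,-2,1,-2], [0,-2,1,-2], [2,1,3,5], [0,0,1,1], [1,0,1,2]]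

def wrow27 : List (List ℤ) := [[], [], [], [], [], [], [], [], [], [], [], [], [], [], [], [], [], [], [], [], [], [], [], [], [], [], [], [], [0,-1,1,-1], [0,-1,2,0], [0,-2,1,-2], [0,-2,2,-1], [0,-2,1,-2], [0,-1,1,-1], [0,-1,2,0], [0,-1,1,-1], [0,-1,2,0], [0,-1,2,0], [0,-1,1,0], [0,-1,2,0], [0,-1,1,0], [0,0,1,1], [0,-1,1,0], [0,0,1,1], [0,-2,1,-2], [0,-1,1,0], [0,-1,1,0], [0,-1,1,0], [0,-2,1,-2], [0,-2,1,-2], [0,-2,1,-2], [0,-2,1,-2], [2,1,3,5], [0,0,1,1], [1,0,1,2]]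

def wrow28 : List (List ℤ) := [[], [], [], [], [], [], [], [], [], [], [], [], [], [], [], [], [], [], [], [], [], [], [], [], [], [], [], [], [], [0,-1,2,0], [1,-2,3,0], [1,-3,5,0], [1,-2,2,0], [1,-1,3,1], [1,-2,5,1], [1,0,2,2], [-1,-1,2,0], [-2,-1,2,0], [0,-1,1,0], [-3,-1,2,0], [0,-1,1,0], [0,0,1,1], [0,-1,2,1], [0,0,1,1], [1,-2,1,0], [0,-1,1,0], [0,-1,1,0], [0,-1,1,0], [1,-2,0,0], [3,-2,4,4], [3,-2,4,4], [2,-1,2,3], [1,1,1,3], [0,0,1,1], [1,0,1,2]]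

def wrow29 : List (List ℤ) := [[], [], [], [], [], [], [], [], [], [], [], [], [], [], [], [], [], [], [], [], [], [], [], [], [], [], [], [], [], [], [1,1,-3,0], [1,0,-1,0], [1,-1,0,0], [1,2,-3,1], [1,1,-1,1], [1,1,0,2], [-1,-1,2,0], [-2,-1,2,0], [0,-1,1,0], [-3,-1,2,0], [0,-1,1,0], [-2,-1,3,1], [0,-1,2,1], [0,0,1,1], [1,-2,1,0], [0,-1,1,0], [0,-1,1,0], [1,-2,0,0], [4,-7,-1,0], [2,-1,1,2], [4,-5,1,2], [2,-1,2,3], [1,1,1,3], [0,0,1,1], [2,0,1,3]]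

def wrow30 : List (List ℤ) := [[], [], [], [], [], [], [], [], [], [], [], [], [], [], [], [], [], [], [], [], [], [], [], [], [], [], [], [], [], [], [], [0,-1,2,0], [1,-2,2,0], [0,1,0,1], [0,0,2,1], [1,0,2,2], [-1,-1,2,0], [-2,-1,2,0], [0,-1,1,0], [-3,-1,2,0], [0,-1,1,0], [0,0,1,1], [0,0,1,1], [0,0,1,1], [1,-2,1,0], [0,-1,1,0], [0,-1,1,0], [0,-1,1,0], [1,-2,0,0], [1,-1,1,1], [1,-1,1,1], [2,-1,2,3], [1,1,1,3], [0,0,1,1], [2,1,2,5]]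

def wrow31 : List (List ℤ) := [[], [], [], [], [], [], [], [], [], [], [], [], [], [], [], [], [], [], [], [], [], [], [], [], [], [], [], [], [], [], [], [], [1,-1,0,0], [0,2,-2,1], [0,1,0,1], [1,1,0,2], [-1,-1,2,0], [-4,-1,3,0], [0,-1,1,0], [-3,-1,2,0], [0,-1,1,0], [-4,-1,5,2], [0,0,1,1], [0,0,1,1], [1,-2,1,0], [0,-1,1,0], [0,-1,1,0], [1,-2,0,0], [4,-7,-1,0], [1,-1,1,1], [4,-5,1,2], [2,-1,2,3], [1,1,1,3], [0,0,1,1], [2,1,2,5]]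

def wrow32 : List (List ℤ) := [[], [], [], [], [], [], [], [], [], [], [], [], [], [], [], [], [], [], [], [], [], [], [], [], [], [], [], [], [], [], [], [], [], [-1,3,-2,1], [-1,2,0,1], [0,1,0,1], [-1,-1,2,0], [-4,-1,3,0], [0,-1,1,0], [-3,-1,2,0], [0,-1,1,0], [-4,-1,5,2], [0,0,1,1], [0,0,1,1], [1,-2,1,0], [0,-1,1,0], [0,-1,1,0], [1,-3,1,0], [1,-2,0,0], [1,-1,1,1], [2,-3,1,1], [2,-1,2,3], [1,1,1,3], [0,0,1,1], [2,1,2,5]]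

def wrow33 : List (List ℤ) := [[], [], [], [], [], [], [], [], [], [], [], [], [], [], [], [], [], [], [], [], [], [], [], [], [], [], [], [], [], [], [], [], [], [], [0,-1,2,0], [1,0,2,2], [-1,-1,2,0], [-2,-1,2,0], [0,-1,1,0], [-3,-1,2,0], [0,-1,1,0], [0,0,1,1], [0,-1,1,0], [0,0,1,1], [1,-2,1,0], [0,-1,1,0], [0,-1,1,0], [0,-1,1,0], [0,-2,-1,-2], [1,-1,1,1], [0,-2,-1,-2], [1,0,1,2], [1,1,1,3], [0,0,1,1], [1,0,1,2]]

def wrow34 : List (List ℤ) := [[], [], [], [], [], [], [], [], [], [], [], [], [], [], [], [], [], [], [], [], [], [], [], [], [], [], [], [], [], [], [], [], [], [], [], [1,1,0,2], [-1,-1,2,0], [-4,-2,3,-1], [0,-1,1,0], [-6,-2,3,-1], [0,-1,1,0], [-2,-1,1,-1], [0,-1,1,0], [0,0,1,1], [1,-2,1,0], [0,-1,1,0], [0,-1,1,0], [0,-4,-1,-3], [0,-2,-1,-2], [1,-1,1,1], [0,-2,-1,-2], [1,0,1,2], [1,1,1,3], [0,0,1,1], [1,0,1,2]]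

def wrow35 : List (List ℤ) := [[], [], [], [], [], [], [], [], [], [], [], [], [], [], [], [], [], [], [], [], [], [], [], [], [], [], [], [], [], [], [], [], [], [], [], [], [-1,-1,2,0], [-4,-2,1,-3], [0,-1,1,0], [-6,-2,3,-1], [0,-1,1,0], [-2,-1,0,-2], [0,-1,1,0], [0,0,1,1], [1,-2,1,0], [0,-1,1,0], [0,-1,1,0], [0,-2,0,-1], [0,-2,-1,-2], [1,-1,1,1], [0,-2,-1,-2], [1,0,1,2], [1,1,1,3], [0,0,1,1], [1,0,1,2]]

def wrow36 : List (List ℤ) := [[], [], [], [], [], [], [], [], [], [], [], [], [], [], [], [], [], [], [], [], [], [], [], [], [], [], [], [], [], [], [], [], [], [], [], [], [], [-2,-1,2,0], [0,-1,1,0], [-3,-1,2,0], [1,-1,0,0], [-2,-1,3,1], [0,-1,2,1], [0,0,1,1], [1,-1,0,0], [1,0,-1,0], [2,-1,-1,0], [1,-2,0,0], [4,-7,-1,0], [2,-1,1,2], [4,-5,1,2], [4,-2,3,5], [1,1,0,2], [1,1,1,3], [2,0,1,3]]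

def wrow37 : List (List ℤ) := [[], [], [], [], [], [], [], [], [], [], [], [], [], [], [], [], [], [], [], [], [], [], [], [], [], [], [], [], [], [], [], [], [], [], [], [], [], [], [2,0,-1,0], [-3,-1,2,0], [1,-1,0,0], [0,0,1,1], [2,0,0,1], [2,1,0,2], [1,0,-1,0], [1,0,-1,0], [2,-1,-1,0], [4,-6,-1,0], [2,-3,-1,0], [1,0,0,1], [1,0,0,1], [2,0,1,3], [1,1,0,2], [1,1,1,3], [2,0,1,3]]

def wrow38 : List (List ℤ) := [[], [], [], [], [], [], [], [], [], [], [], [], [], [], [], [], [], [], [], [], [], [], [], [], [], [], [], [], [], [], [], [], [], [], [], [], [], [], [], [-3,-1,2,0], [1,-1,0,0], [-2,0,2,1], [0,0,1,1], [0,1,1,2], [1,0,-1,0], [1,0,-1,0], [2,-1,-1,0], [1,-2,0,0], [4,-7,-1,0], [1,0,0,1], [4,-5,1,2], [2,0,1,3], [1,1,0,2], [1,1,1,3], [4,2,3,9]]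

def wrow39 : List (List ℤ) := [[], [], [], [], [], [], [], [], [], [], [], [], [], [], [], [], [], [], [], [], [], [], [], [], [], [], [], [], [], [], [], [], [], [], [], [], [], [], [], [], [2,0,-1,0], [3,1,-1,1], [5,1,-2,1], [2,1,0,2], [1,0,-1,0], [1,0,-1,0], [2,-1,-1,0], [2,-2,-1,0], [2,-3,-1,0], [8,2,-4,5], [1,0,0,1], [1,0,0,1], [2,2,-1,3], [1,1,1,3], [1,0,0,1]]

def wrow40 : List (List ℤ) := [[], [], [], [], [], [], [], [], [], [], [], [], [], [], [], [], [], [], [], [], [], [], [], [], [], [], [], [], [], [], [], [], [], [], [], [], [], [], [], [], [], [-3,1,2,1], [-1,1,1,1], [0,1,1,2], [0,1,-1,0], [1,0,-1,0], [2,-1,-1,0], [2,-2,-1,0], [2,-3,-1,0], [2,0,-1,1], [3,-2,-1,1], [1,0,0,1], [0,1,0,1], [0,1,1,2], [1,1,1,3]]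

def wrow41 : List (List ℤ) := [[], [], [], [], [], [], [], [], [], [], [], [], [], [], [], [], [], [], [], [], [], [], [], [], [], [], [], [], [], [], [], [], [], [], [], [], [], [], [], [], [], [], [2,0,-1,0], [2,1,0,2], [1,0,-1,0], [1,0,-1,0], [2,-1,-1,0], [2,-2,-1,0], [1,-3,-1,-1], [1,0,-1,0], [1,0,0,1], [1,0,0,1], [1,1,0,2], [1,1,1,3], [1,0,0,1]]

def wrow42 : List (List ℤ) := [[], [], [], [], [], [], [], [], [], [], [], [], [], [], [], [], [], [], [], [], [], [], [], [], [], [], [], [], [], [], [], [], [], [], [], [], [], [], [], [], [], [], [], [0,1,1,2], [1,0,-1,0], [1,0,-1,0], [2,-1,-1,0], [1,-2,-1,-1], [1,-3,-1,-1], [1,0,-1,0], [1,-2,-1,-1], [1,0,0,1], [1,1,0,2], [1,1,1,3], [2,1,1,4]]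

def wrow43 : List (List ℤ) := [[], [], [], [], [], [], [], [], [], [], [], [], [], [], [], [], [], [], [], [], [], [], [], [], [], [], [], [], [], [], [], [], [], [], [], [], [], [], [], [], [], [], [], [], [1,0,-1,0], [1,0,-1,0], [2,-1,-1,0], [0,-2,-1,-2], [0,-2,-1,-2], [1,0,-1,0], [0,-2,-1,-2], [1,0,0,1], [1,1,0,2], [1,1,1,3], [1,0,0,1]]

def wrow44 : List (List ℤ) := [[], [], [], [], [], [], [], [], [], [], [], [], [], [], [], [], [], [], [], [], [], [], [], [], [], [], [], [], [], [], [], [], [], [], [], [], [], [], [], [], [], [], [], [], [], [0,-1,1,0], [-1,0,1,0], [1,-3,1,0], [1,-2,0,0], [1,-1,1,1], [2,-3,1,1], [1,0,1,2], [0,1,0,1], [0,0,1,1], [1,1,1,3]]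

def wrow45 : List (List ℤ) := [[], [], [], [], [], [], [], [], [], [], [], [], [], [], [], [], [], [], [], [], [], [], [], [], [], [], [], [], [], [], [], [], [], [], [], [], [], [], [], [], [], [], [], [], [], [], [-1,0,1,0], [1,-2,0,0], [2,-3,-1,0], [1,0,0,1], [2,-2,0,1], [1,0,1,2], [0,1,0,1], [0,1,1,2], [1,1,1,3]]

def wrow46 : List (List ℤ) := [[], [], [], [], [], [], [], [], [], [], [], [], [], [], [], [], [], [], [], [], [], [], [], [], [], [], [], [], [], [], [], [], [], [], [], [], [], [], [], [], [], [], [], [], [], [], [], [2,-2,-1,0], [2,-3,-1,0], [2,0,-1,1], [3,-2,-1,1], [1,0,0,1], [0,1,0,1], [0,1,1,2], [1,1,1,3]]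

def wrow47 : List (List ℤ) := [[], [], [], [], [], [], [], [], [], [], [], [], [], [], [], [], [], [], [], [], [], [], [], [], [], [], [], [], [], [], [], [], [], [], [], [], [], [], [], [], [], [], [], [], [], [], [], [], [2,-3,-1,0], [0,2,0,1], [1,0,0,1], [0,2,1,2], [0,1,0,1], [0,1,1,2], [1,1,1,3]]

def wrow48 : List (List ℤ) := [[], [], [], [], [], [], [], [], [], [], [], [], [], [], [], [], [], [], [], [], [], [], [], [], [], [], [], [], [], [], [], [], [], [], [], [], [], [], [], [], [], [], [], [], [], [], [], [], [], [-2,5,1,1], [-1,3,1,1], [0,2,1,2], [0,1,0,1], [0,1,1,2], [0,2,1,2]]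

def wrow49 : List (List ℤ) := [[], [], [], [], [], [], [], [], [], [], [], [], [], [], [], [], [], [], [], [], [], [], [], [], [], [], [], [], [], [], [], [], [], [], [], [], [], [], [], [], [], [], [], [], [], [], [], [], [], [], [1,-2,0,0], [1,0,1,2], [0,1,0,1], [0,1,1,2], [1,1,1,3]]

def wrow50 : List (List ℤ) := [[], [], [], [], [], [], [], [], [], [], [], [], [], [], [], [], [], [], [], [], [], [], [], [], [], [], [], [], [], [], [], [], [], [], [], [], [], [], [], [], [], [], [], [], [], [], [], [], [], [], [], [0,2,1,2], [0,1,0,1], [0,1,1,2], [1,1,1,3]]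

def wrow51 : List (List ℤ) := [[], [], [], [], [], [], [], [], [], [], [], [], [], [], [], [], [], [], [], [], [], [], [], [], [], [], [], [], [], [], [], [], [], [], [], [], [], [], [], [], [], [], [], [], [], [], [], [], [], [], [], [], [0,1,0,1], [0,1,1,2], [1,1,1,3]]

def wrow52 : List (List ℤ) := [[], [], [], [], [], [], [], [], [], [], [], [], [], [], [], [], [], [], [], [], [], [], [], [], [], [], [], [], [], [], [], [], [], [], [], [], [], [], [], [], [], [], [], [], [], [], [], [], [], [], [], [], [], [0,0,1,1], [1,0,1,2]]

def wrow53 : List (List ℤ) := [[], [], [], [], [], [], [], [], [], [], [], [], [], [], [], [], [], [], [], [], [], [], [], [], [], [], [], [], [], [], [], [], [], [], [], [], [], [], [], [], [], [], [], [], [], [], [], [], [], [], [], [], [], [], [1,0,0,1]]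

def wrow54 : List (List ℤ) := [[], [], [], [], [], [], [], [], [], [], [], [], [], [], [], [], [], [], [], [], [], [], [], [], [], [], [], [], [], [], [], [], [], [], [], [], [], [], [], [], [], [], [], [], [], [], [], [], [], [], [], [], [], [], []]

def wtab : List (List (List ℤ)) := [wrow0, wrow1, wrow2, wrow3, wrow4, wrow5, wrow6, wrow7, wrow8, wrow9, wrow10, wrow11, wrow12, wrow13, wrow14, wrow15, wrow16, wrow17, wrow18, wrow19, wrow20, wrow21, wrow22, wrow23, wrow24, wrow25, wrow26, wrow27, wrow28, wrow29, wrow30, wrow31, wrow32, wrow33, wrow34, wrow35, wrow36, wrow37, wrow38, wrow39, wrow40, wrow41, wrow42, wrow43, wrow44, wrow45, wrow46, wrow47, wrow48, wrow49, wrow50, wrow51, wrow52, wrow53, wrow54]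


def wL (i j : Fin 55) : List ℤ := (wtab.getD i.1 []).getD j.1 []

def idot (a b : List ℤ) : ℤ := (List.zipWith (· * ·) a b).sum

def dotR (w v : Fin 4 → ℝ) : ℝ := ∑ l, w l * v l

lemma coneS_mono {A B : Set (Fin 4 → ℝ)} (h : A ⊆ B) : coneS A ⊆ coneS B := by
  rintro x ⟨n, cf, v, h1, h2, rfl⟩
  exact ⟨n, cf, v, h1, fun i => h (h2 i), rfl⟩

lemma zero_mem_coneS (A : Set (Fin 4 → ℝ)) : (0 : Fin 4 → ℝ) ∈ coneS A :=
  ⟨0, (fun i => i.elim0), (fun i => i.elim0), (fun i => i.elim0), (fun i => i.elim0), by simp⟩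

lemma add_mem_coneS {A : Set (Fin 4 → ℝ)} {x y : Fin 4 → ℝ}
    (hx : x ∈ coneS A) (hy : y ∈ coneS A) : x + y ∈ coneS A := by
  obtain ⟨n, cf, v, h1, h2, rfl⟩ := hx
  obtain ⟨m, df, u, g1, g2, rfl⟩ := hy
  refine ⟨n + m, Fin.append cf df, Fin.append v u, ?_, ?_, ?_⟩
  · intro i
    induction i using Fin.addCases with
    | left i => simpa [Fin.append_left] using h1 i
    | right i => simpa [Fin.append_right] using g1 i
  · intro i
    induction i using Fin.addCases with
    | left i => simpa [Fin.append_left] using h2 i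
    | right i => simpa [Fin.append_right] using g2 i
  · rw [Fin.sum_univ_add]
    simp [Fin.append_left, Fin.append_right]

lemma smul_mem_coneS {A : Set (Fin 4 → ℝ)} {v : Fin 4 → ℝ} {c : ℝ}
    (hv : v ∈ A) (hc : 0 ≤ c) : c • v ∈ coneS A :=
  ⟨1, (fun _ => c), (fun _ => v), (fun _ => hc), (fun _ => hv), by simp⟩

lemma sum_mem_coneS {A : Set (Fin 4 → ℝ)} :
    ∀ (n : ℕ) (cf : Fin n → ℝ) (v : Fin n → (Fin 4 → ℝ)),
    (∀ i, 0 ≤ cf i) → (∀ i, cf i ≠ 0 → v i ∈ A) → (∑ i, cf i • v i) ∈ coneS A := by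
  intro n
  induction n with
  | zero => intro _ _ _ _; simpa using zero_mem_coneS A
  | succ n ih =>
    intro cf v h1 h2
    rw [Fin.sum_univ_succ]
    apply add_mem_coneS
    · by_cases h : cf 0 = 0
      · simpa [h] using zero_mem_coneS A
      · exact smul_mem_coneS (h2 0 h) (h1 0)
    · exact ih _ _ (fun i => h1 i.succ) (fun i hi => h2 i.succ hi)

lemma dotR_sum (w : Fin 4 → ℝ) (n : ℕ) (cf : Fin n → ℝ) (v : Fin n → Fin 4 → ℝ) :
    dotR w (∑ i, cf i • v i) = ∑ i, cf i * dotR w (v i) := by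
  simp only [dotR, Finset.sum_apply, Pi.smul_apply, smul_eq_mul, Finset.mul_sum]
  rw [Finset.sum_comm]
  exact Finset.sum_congr rfl fun i _ => Finset.sum_congr rfl fun l _ => by ring

lemma sep {A B : Set (Fin 4 → ℝ)} (w : Fin 4 → ℝ)
    (hA : ∀ v ∈ A, 0 ≤ dotR w v) (hB : ∀ v ∈ B, dotR w v ≤ 0)
    (h0 : ∀ v ∈ A, dotR w v = 0 → v ∈ B) :
    coneS A ∩ coneS B = coneS (A ∩ B) := by
  apply Set.Subset.antisymm
  · rintro x ⟨hxA, hxB⟩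
    obtain ⟨n, cf, v, h1, h2, rfl⟩ := hxA
    have hle : dotR w (∑ i, cf i • v i) ≤ 0 := by
      obtain ⟨m, df, u, g1, g2, hx⟩ := hxB
      rw [hx, dotR_sum]
      refine Finset.sum_nonpos fun i _ => ?_
      have := hB _ (g2 i)
      nlinarith [g1 i]
    have terms : ∀ i, 0 ≤ cf i * dotR w (v i) := fun i => mul_nonneg (h1 i) (hA _ (h2 i))
    have hsum0 : ∑ i, cf i * dotR w (v i) = 0 :=
      le_antisymm (by rw [← dotR_sum]; exact hle) (Finset.sum_nonneg fun i _ => terms i)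
    have each := (Finset.sum_eq_zero_iff_of_nonneg (fun i _ => terms i)).1 hsum0
    apply sum_mem_coneS n cf v h1
    intro i hi
    refine ⟨h2 i, h0 _ (h2 i) ?_⟩
    rcases mul_eq_zero.1 (each i (Finset.mem_univ i)) with h | h
    · exact absurd h hi
    · exact h
  · exact Set.subset_inter (coneS_mono Set.inter_subset_left) (coneS_mono Set.inter_subset_right)

lemma len4 (l : List ℤ) (h : l.length = 4) : ∃ a b c d : ℤ, l = [a, b, c, d] := by
  rcases l with _|⟨a,_|⟨b,_|⟨c,_|⟨d,_|⟨e,t⟩⟩⟩⟩⟩ <;>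
    first
      | exact ⟨a, b, c, d, rfl⟩
      | simp at h

set_option maxHeartbeats 1000000 in
set_option linter.unusedTactic false in
lemma dot_cast (a b c d : ℤ) (k : Fin 18) :
    dotR ![(a : ℝ), (b : ℝ), (c : ℝ), (d : ℝ)] (V k) = ((idot [a, b, c, d] (Z k) : ℤ) : ℝ) := by
  fin_cases k <;>
    simp only [V, Z, idot, dotR, Fin.sum_univ_four, e1, e2, e3, e4, d1, d2, d3, d4,
      c1, c2, c3, c4, c5, c6, c7, c8, c9, c10] <;>
    norm_num <;> push_cast <;> ring

set_option maxHeartbeats 4000000 in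
lemma Qset_eq : ∀ i : Fin 55, Qset i = {x | ∃ k ∈ Qi i, x = V k} := by
  intro i
  fin_cases i
  · show ({e1, e2, e3, e4} : Set (Fin 4 → ℝ)) = {x | ∃ k ∈ ([0, 1, 2, 3] : List (Fin 18)), x = V k}
    ext x; simp [V0, V1, V2, V3, V4, V5, V6, V7, V8, V9, V10, V11, V12, V13, V14, V15, V16, V17] <;> tauto
  · show ({d1, e2, e3, e4} : Set (Fin 4 → ℝ)) = {x | ∃ k ∈ ([4, 1, 2, 3] : List (Fin 18)), x = V k}
    ext x; simp [V0, V1, V2, V3, V4, V5, V6, V7, V8, V9, V10, V11, V12, V13, V14, V15, V16, V17] <;> tauto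
  · show ({e1, d2, e3, e4} : Set (Fin 4 → ℝ)) = {x | ∃ k ∈ ([0, 5, 2, 3] : List (Fin 18)), x = V k}
    ext x; simp [V0, V1, V2, V3, V4, V5, V6, V7, V8, V9, V10, V11, V12, V13, V14, V15, V16, V17] <;> tauto
  · show ({e1, e2, d3, e4} : Set (Fin 4 → ℝ)) = {x | ∃ k ∈ ([0, 1, 6, 3] : List (Fin 18)), x = V k}
    ext x; simp [V0, V1, V2, V3, V4, V5, V6, V7, V8, V9, V10, V11, V12, V13, V14, V15, V16, V17] <;> tauto
  · show ({e1, e2, e3, d4} : Set (Fin 4 → ℝ)) = {x | ∃ k ∈ ([0, 1, 2, 7] : List (Fin 18)), x = V k}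
    ext x; simp [V0, V1, V2, V3, V4, V5, V6, V7, V8, V9, V10, V11, V12, V13, V14, V15, V16, V17] <;> tauto
  · show ({d1, d2, e3, e4} : Set (Fin 4 → ℝ)) = {x | ∃ k ∈ ([4, 5, 2, 3] : List (Fin 18)), x = V k}
    ext x; simp [V0, V1, V2, V3, V4, V5, V6, V7, V8, V9, V10, V11, V12, V13, V14, V15, V16, V17] <;> tauto
  · show ({e1, d2, d3, e4} : Set (Fin 4 → ℝ)) = {x | ∃ k ∈ ([0, 5, 6, 3] : List (Fin 18)), x = V k}
    ext x; simp [V0, V1, V2, V3, V4, V5, V6, V7, V8, V9, V10, V11, V12, V13, V14, V15, V16, V17] <;> tauto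
  · show ({d1, e2, d3, e4} : Set (Fin 4 → ℝ)) = {x | ∃ k ∈ ([4, 1, 6, 3] : List (Fin 18)), x = V k}
    ext x; simp [V0, V1, V2, V3, V4, V5, V6, V7, V8, V9, V10, V11, V12, V13, V14, V15, V16, V17] <;> tauto
  · show ({e1, d2, e3, d3} : Set (Fin 4 → ℝ)) = {x | ∃ k ∈ ([0, 5, 2, 6] : List (Fin 18)), x = V k}
    ext x; simp [V0, V1, V2, V3, V4, V5, V6, V7, V8, V9, V10, V11, V12, V13, V14, V15, V16, V17] <;> tauto
  · show ({e1, e2, d3, d1} : Set (Fin 4 → ℝ)) = {x | ∃ k ∈ ([0, 1, 6, 4] : List (Fin 18)), x = V k}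
    ext x; simp [V0, V1, V2, V3, V4, V5, V6, V7, V8, V9, V10, V11, V12, V13, V14, V15, V16, V17] <;> tauto
  · show ({d1, e2, e3, d2} : Set (Fin 4 → ℝ)) = {x | ∃ k ∈ ([4, 1, 2, 5] : List (Fin 18)), x = V k}
    ext x; simp [V0, V1, V2, V3, V4, V5, V6, V7, V8, V9, V10, V11, V12, V13, V14, V15, V16, V17] <;> tauto
  · show ({e1, e2, d1, d4} : Set (Fin 4 → ℝ)) = {x | ∃ k ∈ ([0, 1, 4, 7] : List (Fin 18)), x = V k}
    ext x; simp [V0, V1, V2, V3, V4, V5, V6, V7, V8, V9, V10, V11, V12, V13, V14, V15, V16, V17] <;> tauto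
  · show ({d2, e2, e3, d4} : Set (Fin 4 → ℝ)) = {x | ∃ k ∈ ([5, 1, 2, 7] : List (Fin 18)), x = V k}
    ext x; simp [V0, V1, V2, V3, V4, V5, V6, V7, V8, V9, V10, V11, V12, V13, V14, V15, V16, V17] <;> tauto
  · show ({d1, e2, d2, d4} : Set (Fin 4 → ℝ)) = {x | ∃ k ∈ ([4, 1, 5, 7] : List (Fin 18)), x = V k}
    ext x; simp [V0, V1, V2, V3, V4, V5, V6, V7, V8, V9, V10, V11, V12, V13, V14, V15, V16, V17] <;> tauto
  · show ({c1, d3, e3, d4} : Set (Fin 4 → ℝ)) = {x | ∃ k ∈ ([8, 6, 2, 7] : List (Fin 18)), x = V k}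
    ext x; simp [V0, V1, V2, V3, V4, V5, V6, V7, V8, V9, V10, V11, V12, V13, V14, V15, V16, V17] <;> tauto
  · show ({e1, c1, e3, d4} : Set (Fin 4 → ℝ)) = {x | ∃ k ∈ ([0, 8, 2, 7] : List (Fin 18)), x = V k}
    ext x; simp [V0, V1, V2, V3, V4, V5, V6, V7, V8, V9, V10, V11, V12, V13, V14, V15, V16, V17] <;> tauto
  · show ({e1, d3, e3, c1} : Set (Fin 4 → ℝ)) = {x | ∃ k ∈ ([0, 6, 2, 8] : List (Fin 18)), x = V k}
    ext x; simp [V0, V1, V2, V3, V4, V5, V6, V7, V8, V9, V10, V11, V12, V13, V14, V15, V16, V17] <;> tauto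
  · show ({c1, d1, d3, d4} : Set (Fin 4 → ℝ)) = {x | ∃ k ∈ ([8, 4, 6, 7] : List (Fin 18)), x = V k}
    ext x; simp [V0, V1, V2, V3, V4, V5, V6, V7, V8, V9, V10, V11, V12, V13, V14, V15, V16, V17] <;> tauto
  · show ({e1, d1, c1, d4} : Set (Fin 4 → ℝ)) = {x | ∃ k ∈ ([0, 4, 8, 7] : List (Fin 18)), x = V k}
    ext x; simp [V0, V1, V2, V3, V4, V5, V6, V7, V8, V9, V10, V11, V12, V13, V14, V15, V16, V17] <;> tauto
  · show ({e1, d1, d3, c1} : Set (Fin 4 → ℝ)) = {x | ∃ k ∈ ([0, 4, 6, 8] : List (Fin 18)), x = V k}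
    ext x; simp [V0, V1, V2, V3, V4, V5, V6, V7, V8, V9, V10, V11, V12, V13, V14, V15, V16, V17] <;> tauto
  · show ({c2, d2, e3, d4} : Set (Fin 4 → ℝ)) = {x | ∃ k ∈ ([9, 5, 2, 7] : List (Fin 18)), x = V k}
    ext x; simp [V0, V1, V2, V3, V4, V5, V6, V7, V8, V9, V10, V11, V12, V13, V14, V15, V16, V17] <;> tauto
  · show ({d3, c2, e3, d4} : Set (Fin 4 → ℝ)) = {x | ∃ k ∈ ([6, 9, 2, 7] : List (Fin 18)), x = V k}
    ext x; simp [V0, V1, V2, V3, V4, V5, V6, V7, V8, V9, V10, V11, V12, V13, V14, V15, V16, V17] <;> tauto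
  · show ({c3, d2, c2, d4} : Set (Fin 4 → ℝ)) = {x | ∃ k ∈ ([10, 5, 9, 7] : List (Fin 18)), x = V k}
    ext x; simp [V0, V1, V2, V3, V4, V5, V6, V7, V8, V9, V10, V11, V12, V13, V14, V15, V16, V17] <;> tauto
  · show ({d3, c3, c2, d4} : Set (Fin 4 → ℝ)) = {x | ∃ k ∈ ([6, 10, 9, 7] : List (Fin 18)), x = V k}
    ext x; simp [V0, V1, V2, V3, V4, V5, V6, V7, V8, V9, V10, V11, V12, V13, V14, V15, V16, V17] <;> tauto
  · show ({d3, d2, c3, d4} : Set (Fin 4 → ℝ)) = {x | ∃ k ∈ ([6, 5, 10, 7] : List (Fin 18)), x = V k}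
    ext x; simp [V0, V1, V2, V3, V4, V5, V6, V7, V8, V9, V10, V11, V12, V13, V14, V15, V16, V17] <;> tauto
  · show ({c3, d2, e3, c2} : Set (Fin 4 → ℝ)) = {x | ∃ k ∈ ([10, 5, 2, 9] : List (Fin 18)), x = V k}
    ext x; simp [V0, V1, V2, V3, V4, V5, V6, V7, V8, V9, V10, V11, V12, V13, V14, V15, V16, V17] <;> tauto
  · show ({d3, c3, e3, c2} : Set (Fin 4 → ℝ)) = {x | ∃ k ∈ ([6, 10, 2, 9] : List (Fin 18)), x = V k}
    ext x; simp [V0, V1, V2, V3, V4, V5, V6, V7, V8, V9, V10, V11, V12, V13, V14, V15, V16, V17] <;> tauto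
  · show ({d3, d2, e3, c3} : Set (Fin 4 → ℝ)) = {x | ∃ k ∈ ([6, 5, 2, 10] : List (Fin 18)), x = V k}
    ext x; simp [V0, V1, V2, V3, V4, V5, V6, V7, V8, V9, V10, V11, V12, V13, V14, V15, V16, V17] <;> tauto
  · show ({c5, d2, d3, e4} : Set (Fin 4 → ℝ)) = {x | ∃ k ∈ ([12, 5, 6, 3] : List (Fin 18)), x = V k}
    ext x; simp [V0, V1, V2, V3, V4, V5, V6, V7, V8, V9, V10, V11, V12, V13, V14, V15, V16, V17] <;> tauto
  · show ({c4, c5, d3, e4} : Set (Fin 4 → ℝ)) = {x | ∃ k ∈ ([11, 12, 6, 3] : List (Fin 18)), x = V k}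
    ext x; simp [V0, V1, V2, V3, V4, V5, V6, V7, V8, V9, V10, V11, V12, V13, V14, V15, V16, V17] <;> tauto
  · show ({c6, d2, c5, e4} : Set (Fin 4 → ℝ)) = {x | ∃ k ∈ ([13, 5, 12, 3] : List (Fin 18)), x = V k}
    ext x; simp [V0, V1, V2, V3, V4, V5, V6, V7, V8, V9, V10, V11, V12, V13, V14, V15, V16, V17] <;> tauto
  · show ({c4, c6, c5, e4} : Set (Fin 4 → ℝ)) = {x | ∃ k ∈ ([11, 13, 12, 3] : List (Fin 18)), x = V k}
    ext x; simp [V0, V1, V2, V3, V4, V5, V6, V7, V8, V9, V10, V11, V12, V13, V14, V15, V16, V17] <;> tauto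
  · show ({c4, d2, c6, e4} : Set (Fin 4 → ℝ)) = {x | ∃ k ∈ ([11, 5, 13, 3] : List (Fin 18)), x = V k}
    ext x; simp [V0, V1, V2, V3, V4, V5, V6, V7, V8, V9, V10, V11, V12, V13, V14, V15, V16, V17] <;> tauto
  · show ({c6, d2, d3, c5} : Set (Fin 4 → ℝ)) = {x | ∃ k ∈ ([13, 5, 6, 12] : List (Fin 18)), x = V k}
    ext x; simp [V0, V1, V2, V3, V4, V5, V6, V7, V8, V9, V10, V11, V12, V13, V14, V15, V16, V17] <;> tauto
  · show ({c4, c6, d3, c5} : Set (Fin 4 → ℝ)) = {x | ∃ k ∈ ([11, 13, 6, 12] : List (Fin 18)), x = V k}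
    ext x; simp [V0, V1, V2, V3, V4, V5, V6, V7, V8, V9, V10, V11, V12, V13, V14, V15, V16, V17] <;> tauto
  · show ({c4, d2, d3, c6} : Set (Fin 4 → ℝ)) = {x | ∃ k ∈ ([11, 5, 6, 13] : List (Fin 18)), x = V k}
    ext x; simp [V0, V1, V2, V3, V4, V5, V6, V7, V8, V9, V10, V11, V12, V13, V14, V15, V16, V17] <;> tauto
  · show ({c8, c4, d3, e4} : Set (Fin 4 → ℝ)) = {x | ∃ k ∈ ([15, 11, 6, 3] : List (Fin 18)), x = V k}
    ext x; simp [V0, V1, V2, V3, V4, V5, V6, V7, V8, V9, V10, V11, V12, V13, V14, V15, V16, V17] <;> tauto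
  · show ({c7, c8, d3, e4} : Set (Fin 4 → ℝ)) = {x | ∃ k ∈ ([14, 15, 6, 3] : List (Fin 18)), x = V k}
    ext x; simp [V0, V1, V2, V3, V4, V5, V6, V7, V8, V9, V10, V11, V12, V13, V14, V15, V16, V17] <;> tauto
  · show ({c7, c4, c8, e4} : Set (Fin 4 → ℝ)) = {x | ∃ k ∈ ([14, 11, 15, 3] : List (Fin 18)), x = V k}
    ext x; simp [V0, V1, V2, V3, V4, V5, V6, V7, V8, V9, V10, V11, V12, V13, V14, V15, V16, V17] <;> tauto
  · show ({d1, c7, d3, e4} : Set (Fin 4 → ℝ)) = {x | ∃ k ∈ ([4, 14, 6, 3] : List (Fin 18)), x = V k}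
    ext x; simp [V0, V1, V2, V3, V4, V5, V6, V7, V8, V9, V10, V11, V12, V13, V14, V15, V16, V17] <;> tauto
  · show ({d1, c4, c7, e4} : Set (Fin 4 → ℝ)) = {x | ∃ k ∈ ([4, 11, 14, 3] : List (Fin 18)), x = V k}
    ext x; simp [V0, V1, V2, V3, V4, V5, V6, V7, V8, V9, V10, V11, V12, V13, V14, V15, V16, V17] <;> tauto
  · show ({d1, c8, d3, c7} : Set (Fin 4 → ℝ)) = {x | ∃ k ∈ ([4, 15, 6, 14] : List (Fin 18)), x = V k}
    ext x; simp [V0, V1, V2, V3, V4, V5, V6, V7, V8, V9, V10, V11, V12, V13, V14, V15, V16, V17] <;> tauto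
  · show ({d1, c4, c8, c7} : Set (Fin 4 → ℝ)) = {x | ∃ k ∈ ([4, 11, 15, 14] : List (Fin 18)), x = V k}
    ext x; simp [V0, V1, V2, V3, V4, V5, V6, V7, V8, V9, V10, V11, V12, V13, V14, V15, V16, V17] <;> tauto
  · show ({d1, c4, d3, c8} : Set (Fin 4 → ℝ)) = {x | ∃ k ∈ ([4, 11, 6, 15] : List (Fin 18)), x = V k}
    ext x; simp [V0, V1, V2, V3, V4, V5, V6, V7, V8, V9, V10, V11, V12, V13, V14, V15, V16, V17] <;> tauto
  · show ({c9, d2, c4, e4} : Set (Fin 4 → ℝ)) = {x | ∃ k ∈ ([16, 5, 11, 3] : List (Fin 18)), x = V k}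
    ext x; simp [V0, V1, V2, V3, V4, V5, V6, V7, V8, V9, V10, V11, V12, V13, V14, V15, V16, V17] <;> tauto
  · show ({c10, c9, c4, e4} : Set (Fin 4 → ℝ)) = {x | ∃ k ∈ ([17, 16, 11, 3] : List (Fin 18)), x = V k}
    ext x; simp [V0, V1, V2, V3, V4, V5, V6, V7, V8, V9, V10, V11, V12, V13, V14, V15, V16, V17] <;> tauto
  · show ({d1, c10, c4, e4} : Set (Fin 4 → ℝ)) = {x | ∃ k ∈ ([4, 17, 11, 3] : List (Fin 18)), x = V k}
    ext x; simp [V0, V1, V2, V3, V4, V5, V6, V7, V8, V9, V10, V11, V12, V13, V14, V15, V16, V17] <;> tauto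
  · show ({d1, c9, c10, e4} : Set (Fin 4 → ℝ)) = {x | ∃ k ∈ ([4, 16, 17, 3] : List (Fin 18)), x = V k}
    ext x; simp [V0, V1, V2, V3, V4, V5, V6, V7, V8, V9, V10, V11, V12, V13, V14, V15, V16, V17] <;> tauto
  · show ({d1, d2, c9, e4} : Set (Fin 4 → ℝ)) = {x | ∃ k ∈ ([4, 5, 16, 3] : List (Fin 18)), x = V k}
    ext x; simp [V0, V1, V2, V3, V4, V5, V6, V7, V8, V9, V10, V11, V12, V13, V14, V15, V16, V17] <;> tauto
  · show ({c10, d2, c4, c9} : Set (Fin 4 → ℝ)) = {x | ∃ k ∈ ([17, 5, 11, 16] : List (Fin 18)), x = V k}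
    ext x; simp [V0, V1, V2, V3, V4, V5, V6, V7, V8, V9, V10, V11, V12, V13, V14, V15, V16, V17] <;> tauto
  · show ({d1, d2, c10, c9} : Set (Fin 4 → ℝ)) = {x | ∃ k ∈ ([4, 5, 17, 16] : List (Fin 18)), x = V k}
    ext x; simp [V0, V1, V2, V3, V4, V5, V6, V7, V8, V9, V10, V11, V12, V13, V14, V15, V16, V17] <;> tauto
  · show ({d1, d2, c4, c10} : Set (Fin 4 → ℝ)) = {x | ∃ k ∈ ([4, 5, 11, 17] : List (Fin 18)), x = V k}
    ext x; simp [V0, V1, V2, V3, V4, V5, V6, V7, V8, V9, V10, V11, V12, V13, V14, V15, V16, V17] <;> tauto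
  · show ({c4, d2, d3, d4} : Set (Fin 4 → ℝ)) = {x | ∃ k ∈ ([11, 5, 6, 7] : List (Fin 18)), x = V k}
    ext x; simp [V0, V1, V2, V3, V4, V5, V6, V7, V8, V9, V10, V11, V12, V13, V14, V15, V16, V17] <;> tauto
  · show ({d1, c4, d3, d4} : Set (Fin 4 → ℝ)) = {x | ∃ k ∈ ([4, 11, 6, 7] : List (Fin 18)), x = V k}
    ext x; simp [V0, V1, V2, V3, V4, V5, V6, V7, V8, V9, V10, V11, V12, V13, V14, V15, V16, V17] <;> tauto
  · show ({d1, d2, c4, d4} : Set (Fin 4 → ℝ)) = {x | ∃ k ∈ ([4, 5, 11, 7] : List (Fin 18)), x = V k}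
    ext x; simp [V0, V1, V2, V3, V4, V5, V6, V7, V8, V9, V10, V11, V12, V13, V14, V15, V16, V17] <;> tauto

set_option maxRecDepth 100000 in
set_option maxHeartbeats 16000000 in
theorem check_ok : ∀ i j : Fin 55, i < j →
    (wL i j).length = 4 ∧
    (∀ k ∈ Qi i, 0 ≤ idot (wL i j) (Z k)) ∧
    (∀ k ∈ Qi j, idot (wL i j) (Z k) ≤ 0) ∧
    (∀ k ∈ Qi i, idot (wL i j) (Z k) = 0 → k ∈ Qi j) := by decide

theorem delta_prime_cones_meet_in_common_face :
    ∀ i j : Fin 55, i ≠ j →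
      coneS (Qset i) ∩ coneS (Qset j) = coneS (Qset i ∩ Qset j) := by
  have key : ∀ i j : Fin 55, i < j →
      coneS (Qset i) ∩ coneS (Qset j) = coneS (Qset i ∩ Qset j) := by
    intro i j hij
    obtain ⟨hlen, h1, h2, h3⟩ := check_ok i j hij
    obtain ⟨a, b, c, d, hw⟩ := len4 _ hlen
    rw [hw] at h1 h2 h3
    rw [Qset_eq i, Qset_eq j]
    apply sep ![(a : ℝ), (b : ℝ), (c : ℝ), (d : ℝ)]
    · rintro v ⟨k, hk, rfl⟩
      rw [dot_cast]
      exact_mod_cast h1 k hk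
    · rintro v ⟨k, hk, rfl⟩
      rw [dot_cast]
      exact_mod_cast h2 k hk
    · rintro v ⟨k, hk, rfl⟩ h
      rw [dot_cast] at h
      exact ⟨k, h3 k hk (by exact_mod_cast h), rfl⟩
  intro i j hij
  rcases hij.lt_or_gt with h | h
  · exact key i j h
  · rw [Set.inter_comm, Set.inter_comm (Qset i)]
    exact key j i h
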